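/- arXiv:1207.7134 — 4 statements merged into one kernel-verified Lean document; each statement's English description precedes it below -/
import Mathlib

section
/- Let x_1,...,x_k and y_1,...,y_k be natural numbers with y_i ≤ x_i for all i, Σ x_i = n > 0, and Σ y_i = h. Then -(1/n)·Σ_i [(x_i - y_i)·log₂ x_i + log₂(y_i!)] ≤ -Σ_i (x_i/n)·log₂(x_i/n) - log₂ n - (1/n)·Σ_i y_i·log₂(y_i/x_i) + (h/n)·log₂ e, where terms involving log₂ 0 or 0·log₂(0/x) are taken to be 0. -/
/-!
Expanding `log₂ (x_i / n)` and `log₂ (y_i / x_i)` (harmless where `x_i = 0`, as then `y_i = 0`),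
the terms `x_i log₂ x_i`, `y_i log₂ x_i` and `log₂ n` cancel from both sides, and what remains is
`∑ y_i log₂ y_i - h log₂ e ≤ ∑ log₂ (y_i!)`. This is the sum of the bounds `y! ≥ (y / e) ^ y`,
each of which says that the single term `y ^ y / y!` of the exponential series of `e ^ y` is at
most `e ^ y`.
-/

open Real Finset

theorem mul_log_sub_self_le_log_factorial (m : ℕ) :
    (m : ℝ) * log m - m ≤ log m.factorial := by
  rcases Nat.eq_zero_or_pos m with rfl | hm
  · simp
  have hbound : log ((m : ℝ) ^ m / m.factorial) ≤ m := by
    simpa using log_le_log (by positivity) (pow_div_factorial_le_exp _ (Nat.cast_nonneg m) m)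
  rw [log_div (by positivity) (by positivity), log_pow] at hbound
  linarith

theorem mul_logb_sub_le_logb_factorial {b : ℝ} (hb : 1 < b) (m : ℕ) :
    (m : ℝ) * logb b m - m * logb b (exp 1) ≤ logb b m.factorial := by
  have hlog := div_le_div_of_nonneg_right (mul_log_sub_self_le_log_factorial m) (log_pos hb).le
  simp only [logb, log_exp]
  linarith [show ((m : ℝ) * log m - m) / log b = m * (log m / log b) - m * (1 / log b) by ring]

theorem sum_div_mul_logb_div {ι : Type*} [Fintype ι] (b : ℝ) (x : ι → ℝ) {s : ℝ} (hs : s ≠ 0)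
    (hx : ∑ i, x i = s) :
    ∑ i, x i / s * logb b (x i / s) = 1 / s * ∑ i, x i * logb b (x i) - logb b s := by
  have hterm : ∀ i,
      x i / s * logb b (x i / s) = 1 / s * (x i * logb b (x i)) - x i / s * logb b s := by
    intro i
    by_cases hxi : x i = 0
    · simp [hxi]
    rw [logb_div hxi hs]
    ring
  simp only [hterm, sum_sub_distrib, ← mul_sum, ← sum_mul, ← sum_div, hx, div_self hs, one_mul]

theorem mul_logb_div_eq_sub {b x y : ℝ} (hyx : x = 0 → y = 0) :
    y * logb b (y / x) = y * logb b y - y * logb b x := by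
  by_cases hy : y = 0
  · simp [hy]
  rw [logb_div hy (mt hyx hy)]
  ring

theorem greedy_log_bound (k n h : ℕ) (hn : 0 < n)
    (x y : Fin k → ℕ) (hyx : ∀ i, y i ≤ x i)
    (hx : ∑ i, x i = n) (hy : ∑ i, y i = h) :
    -(1 / (n : ℝ)) * ∑ i, (((x i : ℝ) - (y i : ℝ)) * Real.logb 2 (x i)
        + Real.logb 2 (Nat.factorial (y i)))
      ≤ -∑ i, ((x i : ℝ) / n) * Real.logb 2 ((x i : ℝ) / n)
        - Real.logb 2 n
        - (1 / (n : ℝ)) * ∑ i, (y i : ℝ) * Real.logb 2 ((y i : ℝ) / (x i : ℝ))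
        + ((h : ℝ) / n) * Real.logb 2 (Real.exp 1) := by
  have hxR : ∑ i, (x i : ℝ) = n := by exact_mod_cast hx
  have hyR : ∑ i, (y i : ℝ) = h := by exact_mod_cast hy
  have hentropy := sum_div_mul_logb_div 2 (fun i => (x i : ℝ)) (by positivity) hxR
  have hrelative : ∑ i, (y i : ℝ) * logb 2 ((y i : ℝ) / (x i : ℝ))
      = ∑ i, (y i : ℝ) * logb 2 (y i) - ∑ i, (y i : ℝ) * logb 2 (x i) := by
    rw [← sum_sub_distrib]
    exact sum_congr rfl fun i _ => mul_logb_div_eq_sub fun hxi =>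
      Nat.cast_eq_zero.mpr (Nat.le_zero.mp ((hyx i).trans_eq (Nat.cast_eq_zero.mp hxi)))
  have hfactorial : ∑ i, (y i : ℝ) * logb 2 (y i) - h * logb 2 (exp 1)
      ≤ ∑ i, logb 2 ((y i).factorial : ℝ) := by
    rw [← hyR, sum_mul, ← sum_sub_distrib]
    exact sum_le_sum fun i _ => mul_logb_sub_le_logb_factorial one_lt_two (y i)
  have hscaled := mul_le_mul_of_nonneg_left hfactorial (by positivity : (0 : ℝ) ≤ 1 / n)
  simp only [sub_mul, sum_add_distrib, sum_sub_distrib] at hentropy ⊢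
  rw [hentropy, hrelative, div_eq_mul_one_div (h : ℝ)]
  linarith
end

section
/- Let U be a finite nonempty set of size n, P₁,...,P_k ⊆ U covering U, and BI : U → Fin k a function with u ∈ P_{BI(u)} and |P_{BI(u)}| = max{|P_j| : u ∈ P_j} for all u. Then for every cover OPT : U → Fin k, Ent(BI) ≤ Ent(OPT) + log₂ f, where f = (Σ_j |P_j|)/n and Ent(g) = -Σ_i (|g⁻¹(i)|/n)·log₂(|g⁻¹(i)|/n). -/
/-!
Write `b i`, `o i` for the fibre sizes of `BI` and `OPT` and `p i = |P i|`. Each `u` lies in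
the `OPT`-fibre of `OPT u`, which is contained in `P (OPT u)`, and `|P (OPT u)| ≤ |P (BI u)|`;
summing `log` over `u` gives `∑ o log o ≤ ∑ b log p`. Gibbs' inequality for the distributions
`b / n` and `p / (f n)` gives `∑ b log p ≤ ∑ b log b + n log f`, and the two combine to the
bound.
-/

open Finset Real

section Gibbs

variable {ι : Type*} [Fintype ι]

lemma mul_log_le_mul_log_add_sub {x y : ℝ} (hx : 0 ≤ x) (hy : 0 ≤ y) (hxy : x ≠ 0 → y ≠ 0) :
    x * log y ≤ x * log x + (y - x) := by
  rcases hx.eq_or_lt with rfl | hx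
  · simpa using hy
  have hy : 0 < y := hy.lt_of_ne' (hxy hx.ne')
  have key := mul_le_mul_of_nonneg_left (log_le_sub_one_of_pos (div_pos hy hx)) hx.le
  rw [log_div hy.ne' hx.ne', mul_sub, mul_sub, mul_div_cancel₀ _ hx.ne'] at key
  linarith

lemma sum_mul_log_le_sum_mul_log_add_log_sum {x q : ι → ℝ} (hx : ∀ i, 0 ≤ x i)
    (hq : ∀ i, 0 ≤ q i) (hxq : ∀ i, x i ≠ 0 → q i ≠ 0) (hx_sum : ∑ i, x i = 1) :
    ∑ i, x i * log (q i) ≤ ∑ i, x i * log (x i) + log (∑ i, q i) := by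
  set S := ∑ i, q i with hS_def
  obtain ⟨j, -, hj⟩ := exists_ne_zero_of_sum_ne_zero (hx_sum.trans_ne one_ne_zero)
  have hS : 0 < S :=
    lt_of_lt_of_le ((hq j).lt_of_ne' (hxq j hj)) (single_le_sum (fun i _ => hq i) (mem_univ j))
  have hlog : ∀ i, x i * log (q i / S) = x i * log (q i) - x i * log S := by
    intro i
    by_cases hi : x i = 0
    · simp [hi]
    · rw [log_div (hxq i hi) hS.ne', mul_sub]
  have gibbs : ∑ i, x i * log (q i / S) ≤ ∑ i, (x i * log (x i) + (q i / S - x i)) :=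
    sum_le_sum fun i _ => mul_log_le_mul_log_add_sub (hx i) (div_nonneg (hq i) hS.le)
      fun hi => div_ne_zero (hxq i hi) hS.ne'
  simp only [hlog, sum_add_distrib, sum_sub_distrib, ← sum_div, ← hS_def, div_self hS.ne',
    hx_sum, ← sum_mul, one_mul, sub_self, add_zero] at gibbs
  linarith

lemma neg_sum_mul_logb (b : ℝ) (x : ι → ℝ) :
    -∑ i, x i * logb b (x i) = (-∑ i, x i * log (x i)) / log b := by
  simp only [logb, ← mul_div_assoc, ← sum_div, neg_div]

lemma neg_sum_mul_logb_le_of_sum_mul_log_le {b : ℝ} (hb : 1 < b) {x y q : ι → ℝ}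
    (hx : ∀ i, 0 ≤ x i) (hq : ∀ i, 0 ≤ q i) (hxq : ∀ i, x i ≠ 0 → q i ≠ 0) (hx_sum : ∑ i, x i = 1)
    (hyx : ∑ i, y i * log (y i) ≤ ∑ i, x i * log (q i)) :
    -∑ i, x i * logb b (x i) ≤ -∑ i, y i * logb b (y i) + logb b (∑ i, q i) := by
  rw [neg_sum_mul_logb, neg_sum_mul_logb, logb, ← add_div]
  have := sum_mul_log_le_sum_mul_log_add_log_sum hx hq hxq hx_sum
  exact div_le_div_of_nonneg_right (by linarith) (log_pos hb).le

end Gibbs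

section Covers

variable {α ι : Type*} [Fintype α] [DecidableEq ι]

lemma card_fiber_le_of_mem {P : ι → Finset α} {g : α → ι} (hg : ∀ u, u ∈ P (g u)) (i : ι) :
    #{u | g u = i} ≤ #(P i) :=
  card_le_card fun u hu => (mem_filter.mp hu).2 ▸ hg u

variable [Fintype ι]

lemma sum_card_fiber_div_mul (g : α → ι) (c : ℝ) (F : ι → ℝ) :
    ∑ i, (#{u | g u = i} : ℝ) / c * F i = (∑ u, F (g u)) / c := by
  rw [← sum_fiberwise' univ g, sum_div]
  refine sum_congr rfl fun i _ => ?_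
  rw [sum_const, nsmul_eq_mul]
  ring

lemma sum_card_fiber_div_mul_log_le {P : ι → Finset α} {g b : α → ι} (hg : ∀ u, u ∈ P (g u))
    (hb : ∀ u i, u ∈ P i → #(P i) ≤ #(P (b u))) {c : ℝ} (hc : 0 < c) :
    ∑ i, (#{u | g u = i} : ℝ) / c * log (#{u | g u = i} / c)
      ≤ ∑ i, (#{u | b u = i} : ℝ) / c * log (#(P i) / c) := by
  rw [sum_card_fiber_div_mul, sum_card_fiber_div_mul]
  refine div_le_div_of_nonneg_right (sum_le_sum fun u _ => ?_) hc.le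
  have hpos : 0 < #{v | g v = g u} := card_pos.mpr ⟨u, by simp⟩
  have hle : #{v | g v = g u} ≤ #(P (b u)) :=
    (card_fiber_le_of_mem hg (g u)).trans (hb u (g u) (hg u))
  gcongr

end Covers

theorem biased_entropy_bound_general {α : Type*} [Fintype α] [Nonempty α]
    (k : ℕ) (P : Fin k → Finset α)
    (BI : α → Fin k) (hBI : ∀ u, u ∈ P (BI u))
    (hBImax : ∀ u i, u ∈ P i → (P i).card ≤ (P (BI u)).card)
    (OPT : α → Fin k) (hOPT : ∀ u, u ∈ P (OPT u))
    (n : ℕ) (hn : n = Fintype.card α)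
    (f : ℝ) (hf : f = (∑ j, ((P j).card : ℝ)) / n) :
    -∑ i, ((Finset.univ.filter (fun u => BI u = i)).card / (n : ℝ)) *
        Real.logb 2 ((Finset.univ.filter (fun u => BI u = i)).card / (n : ℝ))
      ≤ -∑ i, ((Finset.univ.filter (fun u => OPT u = i)).card / (n : ℝ)) *
          Real.logb 2 ((Finset.univ.filter (fun u => OPT u = i)).card / (n : ℝ))
        + Real.logb 2 f := by
  subst hn hf
  have hn : (0 : ℝ) < Fintype.card α := by exact_mod_cast Fintype.card_pos
  rw [sum_div]
  refine neg_sum_mul_logb_le_of_sum_mul_log_le one_lt_two (fun i => by positivity)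
    (fun i => by positivity) ?_ ?_ (sum_card_fiber_div_mul_log_le hOPT hBImax hn)
  · intro i hi
    obtain ⟨u, rfl⟩ : ∃ u, BI u = i := by simpa using hi
    exact div_ne_zero (by exact_mod_cast (card_pos.mpr ⟨u, hBI u⟩).ne') hn.ne'
  · simpa [hn.ne'] using sum_card_fiber_div_mul BI (Fintype.card α) fun _ => 1

theorem biased_entropy_bound {α : Type*} [Fintype α] [DecidableEq α] [Nonempty α]
    (k : ℕ) (P : Fin k → Finset α) (hcover : ∀ u : α, ∃ i, u ∈ P i)
    (BI : α → Fin k) (hBI : ∀ u, u ∈ P (BI u))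
    (hBImax : ∀ u i, u ∈ P i → (P i).card ≤ (P (BI u)).card)
    (OPT : α → Fin k) (hOPT : ∀ u, u ∈ P (OPT u))
    (n : ℕ) (hn : n = Fintype.card α)
    (f : ℝ) (hf : f = (∑ j, ((P j).card : ℝ)) / n) :
    -∑ i, ((Finset.univ.filter (fun u => BI u = i)).card / (n : ℝ)) *
        Real.logb 2 ((Finset.univ.filter (fun u => BI u = i)).card / (n : ℝ))
      ≤ -∑ i, ((Finset.univ.filter (fun u => OPT u = i)).card / (n : ℝ)) *
          Real.logb 2 ((Finset.univ.filter (fun u => OPT u = i)).card / (n : ℝ))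
        + Real.logb 2 f :=
  biased_entropy_bound_general k P BI hBI hBImax OPT hOPT n hn f hf
end

section
/- Let U be a finite nonempty set, P₁,...,P_k ⊆ U a cover of U, OPT : U → Fin k a cover, and BI : U → Fin k the biased assignment (each u sent to a maximum-cardinality set containing it). Then Σ_{u∈U} log₂|P_{BI(u)}| ≥ Σ_{i=1}^k |OPT⁻¹(i)|·log₂|OPT⁻¹(i)|, with terms for empty fibers taken to be 0. -/
/-!
Regroup the left-hand side by the fibres of `OPT`: a fibre of size `m` contributes `m` terms
`log₂ m`, one per element, so it becomes `∑ u, log₂ |OPT⁻¹(OPT u)|`. The fibre of `OPT u`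
contains `u` and lies inside `P (OPT u)`, which `P (BI u)` dominates in size, so the sums compare
termwise.
-/

open Finset

theorem Finset.sum_card_fiber_mul_eq_sum {α β R : Type*} [Fintype α] [Fintype β]
    [DecidableEq β] [Semiring R] (f : α → β) (g : ℕ → R) :
    ∑ i : β, (#{u | f u = i} : R) * g #{u | f u = i} = ∑ u : α, g #{v | f v = f u} := by
  rw [← sum_fiberwise univ f (fun u => g #{v | f v = f u})]
  refine sum_congr rfl fun i _ => ?_
  rw [sum_congr rfl fun u hu => by rw [(mem_filter.mp hu).2], sum_const, nsmul_eq_mul]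

theorem biased_log_sum_bound_general {α : Type*} [Fintype α]
    (k : ℕ) (P : Fin k → Finset α)
    (BI : α → Fin k)
    (hBImax : ∀ u i, u ∈ P i → (P i).card ≤ (P (BI u)).card)
    (OPT : α → Fin k) (hOPT : ∀ u, u ∈ P (OPT u)) :
    ∑ i : Fin k, ((Finset.univ.filter (fun u => OPT u = i)).card : ℝ) *
        Real.logb 2 ((Finset.univ.filter (fun u => OPT u = i)).card)
      ≤ ∑ u : α, Real.logb 2 ((P (BI u)).card) := by
  rw [sum_card_fiber_mul_eq_sum OPT fun n => Real.logb 2 n]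
  refine sum_le_sum fun u _ => ?_
  set fiber : Finset α := {v | OPT v = OPT u}
  have hfiber_sub : fiber ⊆ P (OPT u) := fun v hv => (mem_filter.mp hv).2 ▸ hOPT v
  have hfiber_pos : 0 < #fiber := card_pos.mpr ⟨u, by simp [fiber]⟩
  have hfiber_le : #fiber ≤ #(P (BI u)) :=
    (card_le_card hfiber_sub).trans (hBImax u (OPT u) (hOPT u))
  exact Real.logb_le_logb_of_le one_lt_two (by exact_mod_cast hfiber_pos)
    (by exact_mod_cast hfiber_le)

theorem biased_log_sum_bound {α : Type*} [Fintype α] [DecidableEq α] [Nonempty α]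
    (k : ℕ) (P : Fin k → Finset α) (hcover : ∀ u : α, ∃ i, u ∈ P i)
    (BI : α → Fin k) (hBI : ∀ u, u ∈ P (BI u))
    (hBImax : ∀ u i, u ∈ P i → (P i).card ≤ (P (BI u)).card)
    (OPT : α → Fin k) (hOPT : ∀ u, u ∈ P (OPT u)) :
    ∑ i : Fin k, ((Finset.univ.filter (fun u => OPT u = i)).card : ℝ) *
        Real.logb 2 ((Finset.univ.filter (fun u => OPT u = i)).card)
      ≤ ∑ u : α, Real.logb 2 ((P (BI u)).card) :=
  biased_log_sum_bound_general k P BI hBImax OPT hOPT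
end

section
/- Let g : U → Fin k be a cover of a finite set U of size n > 0 by sets P₁,...,P_k. If H is an incremental greedy cover (at each step an element e is assigned a set of maximum current cardinality among remaining sets containing e, and e is then deleted from all sets), then for each i, the product over v ∈ g⁻¹(i) of the cardinality (at assignment time) of the set greedy assigns to v is at least |g⁻¹(i)|!. -/
open Finset
open scoped Nat

/-- The `j`-th largest element of `S` sees at least `j` elements of `S` at or above it,
so `f` is at least `j` there. -/
theorem Finset.factorial_card_le_prod_of_card_filter_ge_le {α : Type*} [LinearOrder α]
    (S : Finset α) (f : α → ℕ) (h : ∀ v ∈ S, #(S.filter (v ≤ ·)) ≤ f v) :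
    (#S)! ≤ ∏ v ∈ S, f v := by
  induction S using Finset.induction_on_min with
  | empty => simp
  | insert a s ha_lt ih =>
    have ha : a ∉ s := fun has => (ha_lt a has).false
    have hfilter_a : (insert a s).filter (a ≤ ·) = insert a s :=
      filter_true_of_mem fun x hx => (mem_insert.1 hx).elim ge_of_eq fun hxs => (ha_lt x hxs).le
    have hfilter : ∀ v ∈ s, (insert a s).filter (v ≤ ·) = s.filter (v ≤ ·) := fun v hv => by
      rw [filter_insert, if_neg (ha_lt v hv).not_ge]
    rw [card_insert_of_notMem ha, prod_insert ha, Nat.factorial_succ]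
    refine Nat.mul_le_mul ?_ (ih fun v hv => hfilter v hv ▸ h v (mem_insert_of_mem hv))
    simpa only [hfilter_a, card_insert_of_notMem ha] using h a (mem_insert_self a s)

theorem greedy_fiber_product_ge_factorial_general {α : Type*} [Fintype α] [LinearOrder α]
    (k : ℕ) (P : Fin k → Finset α)
    (g : α → Fin k) (hg : ∀ u, u ∈ P (g u))
    (a : α → ℕ)
    (hgreedy : ∀ e i, e ∈ P i → ((P i).filter (fun v => e ≤ v)).card ≤ a e) :
    ∀ i : Fin k,
      Nat.factorial (Finset.univ.filter (fun v => g v = i)).card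
        ≤ ∏ v ∈ Finset.univ.filter (fun v => g v = i), a v := by
  intro i
  have hfiber : univ.filter (fun v => g v = i) ⊆ P i := fun v hv => (mem_filter.1 hv).2 ▸ hg v
  refine (univ.filter fun v => g v = i).factorial_card_le_prod_of_card_filter_ge_le a
    fun v hv => ?_
  calc #((univ.filter fun v => g v = i).filter (v ≤ ·))
      ≤ #((P i).filter (v ≤ ·)) := card_le_card (filter_subset_filter _ hfiber)
    _ ≤ a v := hgreedy v i (hfiber hv)

/-- Elements are processed in increasing order of the linear order on `α`.
When an element `e` is processed, the current version of set `P i` is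
`(P i).filter (fun v => e ≤ v)` (elements processed before `e` have been erased). -/
theorem greedy_fiber_product_ge_factorial {α : Type*} [Fintype α] [DecidableEq α] [LinearOrder α]
    (k : ℕ) (P : Fin k → Finset α)
    (g : α → Fin k) (hg : ∀ u, u ∈ P (g u))
    (H : α → Fin k) (hH : ∀ e, e ∈ P (H e))
    (a : α → ℕ) (ha : ∀ e, a e = ((P (H e)).filter (fun v => e ≤ v)).card)
    (hgreedy : ∀ e i, e ∈ P i → ((P i).filter (fun v => e ≤ v)).card ≤ a e) :
    ∀ i : Fin k,
      Nat.factorial (Finset.univ.filter (fun v => g v = i)).card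
        ≤ ∏ v ∈ Finset.univ.filter (fun v => g v = i), a v :=
  greedy_fiber_product_ge_factorial_general k P g hg a hgreedy
end
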